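/- arXiv:1306.5809 — 3 statements merged into one kernel-verified Lean document; each statement's English description precedes it below -/
import Mathlib

section
/- Let q = 2, so r = 2^m. Let g_1, …, g_u ∈ F_r^* have multiplicative orders n_1, …, n_u with gcd(n_i, n_j) = 1 for all i ≠ j, set N_i = (r−1)/n_i and n = n_1 ⋯ n_u, and for a_1, …, a_u ∈ F_r let c(a_1, …, a_u) ∈ F_2^n be the word with coordinates Tr_{r/2}(Σ_{i=1}^u a_i g_i^t), t = 0, …, n−1. Then the Hamming weight of c(a_1, …, a_u) equals n/2 − (1/2) Π_{i=1}^u η̄_{a_i}, where η̄_{a_i} = n_i if a_i = 0, and η̄_{a_i} = η_j^{(N_i, r)} if a_i ∈ C_j^{(N_i, r)} (equality after casting the weight into ℂ). -/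
/-- The canonical additive character `ψ(x) = e^{2πi·Tr_{F/F_p}(x)/p}` of a finite field `F`
of characteristic `p` (for `p = 2` this is `(-1)^{Tr(x)}`). -/
noncomputable def psi (p : ℕ) (F : Type*) [Field F] [Fintype F] [Algebra (ZMod p) F]
    (x : F) : ℂ :=
  Complex.exp (2 * (Real.pi : ℂ) * Complex.I * ((Algebra.trace (ZMod p) F x).val : ℂ) / (p : ℂ))

/-- The cyclotomic class `C_i^{(N,r)} = α^i ⟨α^N⟩` in a finite field. -/
def cClass (F : Type*) [Field F] (α : Fˣ) (N i : ℕ) : Set F :=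
  {x | ∃ t : ℕ, x = ((α ^ (i + N * t) : Fˣ) : F)}

/-- The Gauss period `η_i^{(N,r)} = Σ_{x ∈ C_i^{(N,r)}} ψ(x)`. -/
noncomputable def gaussPeriod (p : ℕ) (F : Type*) [Field F] [Fintype F] [Algebra (ZMod p) F]
    (α : Fˣ) (N i : ℕ) : ℂ :=
  ∑ t ∈ Finset.range ((Fintype.card F - 1) / N), psi p F ((α ^ (i + N * t) : Fˣ) : F)

/-! Write `ψ` for the trace character, so that `ψ x = (-1) ^ Tr x` and
`2 · wt(c) = n - ∑_t ψ (∑_i aᵢ gᵢ ^ t)`. Since `ψ` is additive the summand is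
`∏_i ψ (aᵢ gᵢ ^ t)`, and as the `nᵢ` are pairwise coprime the Chinese remainder theorem turns the
sum over `t mod n` into the product of the sums over `t mod nᵢ`. The `i`-th factor sums `ψ` over
the coset `aᵢ ⟨gᵢ⟩`. In the cyclic group `F^*` the subgroup `⟨gᵢ⟩` is the unique one of order `nᵢ`,
namely `⟨α ^ Nᵢ⟩`, so this coset is the cyclotomic class of `aᵢ` and the factor is its Gauss period
(or `nᵢ` when `aᵢ = 0`). -/

open Finset Subgroup
open scoped Function

theorem AddChar.map_sum_eq_prod {A M ι : Type*} [AddCommMonoid A] [CommMonoid M]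
    (ψ : AddChar A M) (s : Finset ι) (f : ι → A) : ψ (∑ i ∈ s, f i) = ∏ i ∈ s, ψ (f i) := by
  induction s using Finset.cons_induction with
  | empty => simp
  | cons i s hi ih => rw [sum_cons, prod_cons, AddChar.map_add_eq_mul, ih]

section TraceCharacter

variable (p : ℕ) [NeZero p] (F : Type*) [Field F] [Fintype F] [Algebra (ZMod p) F]

theorem psi_eq_stdAddChar (x : F) :
    psi p F x = ZMod.stdAddChar (Algebra.trace (ZMod p) F x) := by
  rw [ZMod.stdAddChar_apply, ZMod.toCircle_apply, psi]

theorem psi_sum {ι : Type*} (s : Finset ι) (f : ι → F) :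
    psi p F (∑ i ∈ s, f i) = ∏ i ∈ s, psi p F (f i) := by
  simp only [psi_eq_stdAddChar, map_sum, AddChar.map_sum_eq_prod]

theorem psi_two_eq_ite [Algebra (ZMod 2) F] (x : F) :
    psi 2 F x = if Algebra.trace (ZMod 2) F x = 0 then 1 else -1 := by
  rw [psi_eq_stdAddChar]
  generalize Algebra.trace (ZMod 2) F x = z
  obtain rfl | rfl : z = 0 ∨ z = 1 := by revert z; decide
  · simp
  · rw [if_neg one_ne_zero, ← Int.cast_one, ZMod.stdAddChar_coe]
    convert Complex.exp_pi_mul_I using 2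
    push_cast
    ring

end TraceCharacter

theorem two_mul_hammingNorm_eq {ι β R : Type*} [Fintype ι] [Zero β] [DecidableEq β] [Ring R]
    (c : ι → β) :
    2 * (hammingNorm c : R) = Fintype.card ι - ∑ i, if c i = 0 then (1 : R) else -1 := by
  have h (i : ι) : 2 * ((if c i ≠ 0 then 1 else 0 : ℕ) : R) + (if c i = 0 then 1 else -1) = 1 := by
    split_ifs <;> simp_all; norm_num
  rw [eq_sub_iff_add_eq, hammingNorm, card_filter, Nat.cast_sum, mul_sum, ← sum_add_distrib,
    sum_congr rfl fun i _ => h i, sum_const, card_univ, nsmul_one]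

theorem sum_zmod_val_eq_sum_range {M : Type*} [AddCommMonoid M] {n : ℕ} [NeZero n]
    (f : ℕ → M) : ∑ x : ZMod n, f x.val = ∑ t ∈ range n, f t :=
  Finset.sum_nbij' ZMod.val Nat.cast (fun x _ => mem_range.2 x.val_lt) (fun _ _ => mem_univ _)
    (fun x _ => ZMod.natCast_zmod_val x) (fun _ ht => ZMod.val_cast_of_lt (mem_range.1 ht))
    (fun _ _ => rfl)

theorem sum_range_prod_eq_prod_sum_range_of_periodic {ι M : Type*} [Fintype ι]
    [CommSemiring M] (n : ι → ℕ) (hcop : Pairwise (Nat.Coprime on n)) (f : ι → ℕ → M)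
    (hf : ∀ i, Function.Periodic (f i) (n i)) :
    ∑ t ∈ range (∏ i, n i), ∏ i, f i t = ∏ i, ∑ t ∈ range (n i), f i t := by
  by_cases hn : ∃ i, n i = 0
  · obtain ⟨i, hi⟩ := hn
    rw [Finset.prod_eq_zero (mem_univ i) hi, Finset.prod_eq_zero (mem_univ i) (by simp [hi]),
      range_zero, sum_empty]
  classical
  push Not at hn
  have : ∀ i, NeZero (n i) := fun i => ⟨hn i⟩
  have : NeZero (∏ i, n i) := ⟨Finset.prod_ne_zero_iff.2 fun i _ => hn i⟩
  simp only [← sum_zmod_val_eq_sum_range, Finset.prod_univ_sum]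
  refine Fintype.sum_equiv (ZMod.prodEquivPi n hcop).toEquiv _ _ fun x => ?_
  refine Finset.prod_congr rfl fun i _ => ?_
  conv_rhs => rw [RingEquiv.toEquiv_eq_coe, RingEquiv.coe_toEquiv, ZMod.prodEquivPi_apply,
    ZMod.castHom_apply, ← ZMod.natCast_zmod_val x,
    ZMod.cast_natCast (dvd_prod_of_mem n (mem_univ i)), ZMod.val_natCast, (hf i).map_mod_nat]

theorem sum_range_orderOf_mul_pow_eq_sum_zpowers {G M : Type*} [Group G] [AddCommMonoid M]
    (f : G → M) {x : G} (hx : IsOfFinOrder x) (y : G) [Fintype (zpowers x)] :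
    ∑ t ∈ range (orderOf x), f (y * x ^ t) = ∑ h : zpowers x, f (y * h) := by
  rw [← Fin.sum_univ_eq_sum_range (fun t => f (y * x ^ t))]
  exact Fintype.sum_equiv (finEquivZPowers hx) _ _ fun t => by rw [finEquivZPowers_apply]

theorem sum_subgroup_mul_eq_of_inv_mul_mem {G M : Type*} [Group G] [AddCommMonoid M]
    (f : G → M) {H : Subgroup G} [Fintype H] {y y' : G} (hy : y⁻¹ * y' ∈ H) :
    ∑ h : H, f (y * h) = ∑ h : H, f (y' * h) :=
  Fintype.sum_equiv (Equiv.mulLeft ⟨y'⁻¹ * y, by simpa using H.inv_mem hy⟩) _ _ fun h => by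
    simp [mul_assoc]

theorem sum_range_orderOf_mul_pow_eq {G M : Type*} [Group G] [Finite G] [AddCommMonoid M]
    (f : G → M) {x x' y y' : G} (hx : zpowers x = zpowers x') (hy : y⁻¹ * y' ∈ zpowers x) :
    ∑ t ∈ range (orderOf x), f (y * x ^ t) = ∑ t ∈ range (orderOf x'), f (y' * x' ^ t) := by
  classical
  have := Fintype.ofFinite G
  rw [sum_range_orderOf_mul_pow_eq_sum_zpowers f (isOfFinOrder_of_finite x),
    sum_range_orderOf_mul_pow_eq_sum_zpowers f (isOfFinOrder_of_finite x'),
    sum_subgroup_mul_eq_of_inv_mul_mem f hy]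
  exact Fintype.sum_equiv (MulEquiv.subgroupCongr hx).toEquiv _ _ fun _ => rfl

theorem sum_range_mul_pow_of_mem_cClass {F M : Type*} [Field F] [Fintype F] [AddCommMonoid M]
    (f : F → M) {α : Fˣ} (hα : ∀ x : Fˣ, x ∈ zpowers α) (g : Fˣ) {N j : ℕ} {a : F}
    (hN : N = (Fintype.card F - 1) / orderOf g) (ha : a ∈ cClass F α N j) :
    ∑ t ∈ range (orderOf g), f (a * (g : F) ^ t)
      = ∑ t ∈ range ((Fintype.card F - 1) / N), f ((α ^ (j + N * t) : Fˣ) : F) := by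
  classical
  set R := Fintype.card F - 1
  have hαR : IsPrimitiveRoot α R := by
    rw [IsPrimitiveRoot.iff_orderOf, orderOf_eq_card_of_forall_mem_zpowers hα,
      Nat.card_eq_fintype_card, Fintype.card_units]
  have hRpos : 0 < R := Nat.sub_pos_of_lt Fintype.one_lt_card
  have hR : R = N * orderOf g := by
    rw [hN, Nat.div_mul_cancel]
    simpa [Fintype.card_units] using orderOf_dvd_card (x := g)
  have hNpos : 0 < N := Nat.pos_of_mul_pos_right (hR ▸ hRpos)
  have : NeZero (orderOf g) := ⟨(orderOf_pos g).ne'⟩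
  have hzp : zpowers g = zpowers (α ^ N) :=
    (IsPrimitiveRoot.orderOf g).zpowers_eq.trans (hαR.pow hRpos hR).zpowers_eq.symm
  obtain ⟨s, rfl⟩ := ha
  have hmem : (α ^ (j + N * s))⁻¹ * α ^ j ∈ zpowers g := by
    rw [hzp, pow_add, pow_mul]
    simp [mul_assoc]
  have := sum_range_orderOf_mul_pow_eq (fun x : Fˣ => f x) hzp hmem
  rw [← (hαR.pow hRpos hR).eq_orderOf] at this
  rw [Nat.div_eq_of_eq_mul_right hNpos hR]
  simpa [pow_add, pow_mul] using this

theorem stmt2_general (u : ℕ) (F : Type*) [Field F] [Fintype F] [DecidableEq F]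
    [Algebra (ZMod 2) F]
    (α : Fˣ) (hα : ∀ x : Fˣ, x ∈ Subgroup.zpowers α)
    (g : Fin u → Fˣ) (n : Fin u → ℕ) (hord : ∀ i, orderOf (g i) = n i)
    (hcop : ∀ i j, i ≠ j → Nat.Coprime (n i) (n j))
    (N : Fin u → ℕ) (hN : ∀ i, N i = (Fintype.card F - 1) / n i)
    (a : Fin u → F) (j : Fin u → ℕ)
    (hj : ∀ i, a i ≠ 0 → a i ∈ cClass F α (N i) (j i)) :
    (hammingNorm (fun t : Fin (∏ i, n i) =>
        Algebra.trace (ZMod 2) F (∑ i, a i * (g i : F) ^ (t : ℕ))) : ℂ)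
      = (∏ i, (n i : ℂ)) / 2
        - (1 / 2) * ∏ i, (if a i = 0 then (n i : ℂ) else gaussPeriod 2 F α (N i) (j i)) := by
  have hperiodic (i : Fin u) : Function.Periodic (fun t => psi 2 F (a i * (g i : F) ^ t)) (n i) :=
    fun t => by beta_reduce; rw [pow_add, ← hord i, ← orderOf_units, pow_orderOf_eq_one, mul_one]
  have hchar : ∑ t : Fin (∏ i, n i), psi 2 F (∑ i, a i * (g i : F) ^ (t : ℕ))
      = ∏ i, (if a i = 0 then (n i : ℂ) else gaussPeriod 2 F α (N i) (j i)) := by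
    rw [Fin.sum_univ_eq_sum_range (fun t => psi 2 F (∑ i, a i * (g i : F) ^ t))]
    simp_rw [psi_sum]
    rw [sum_range_prod_eq_prod_sum_range_of_periodic n hcop _ hperiodic]
    refine prod_congr rfl fun i _ => ?_
    split_ifs with ha
    · simp [ha, psi_eq_stdAddChar]
    · rw [← hord i, sum_range_mul_pow_of_mem_cClass _ hα (g i) (by rw [hord, hN]) (hj i ha),
        gaussPeriod]
  have hweight := two_mul_hammingNorm_eq (R := ℂ)
    (fun t : Fin (∏ i, n i) => Algebra.trace (ZMod 2) F (∑ i, a i * (g i : F) ^ (t : ℕ)))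
  simp only [← psi_two_eq_ite, hchar, Fintype.card_fin, Nat.cast_prod] at hweight
  linear_combination hweight / 2

/-- for `q = 2` the Hamming weight of `c(a₁, …, a_u)` equals
`n/2 - (1/2) Π_i η̄_{a_i}`. -/
theorem stmt2 (m u : ℕ) (hm : 0 < m) (F : Type*) [Field F] [Fintype F] [DecidableEq F]
    [Algebra (ZMod 2) F] (hr : Fintype.card F = 2 ^ m)
    (α : Fˣ) (hα : ∀ x : Fˣ, x ∈ Subgroup.zpowers α)
    (g : Fin u → Fˣ) (n : Fin u → ℕ) (hord : ∀ i, orderOf (g i) = n i)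
    (hcop : ∀ i j, i ≠ j → Nat.Coprime (n i) (n j))
    (N : Fin u → ℕ) (hN : ∀ i, N i = (Fintype.card F - 1) / n i)
    (a : Fin u → F) (j : Fin u → ℕ) (hjlt : ∀ i, j i < N i)
    (hj : ∀ i, a i ≠ 0 → a i ∈ cClass F α (N i) (j i)) :
    (hammingNorm (fun t : Fin (∏ i, n i) =>
        Algebra.trace (ZMod 2) F (∑ i, a i * (g i : F) ^ (t : ℕ))) : ℂ)
      = (∏ i, (n i : ℂ)) / 2
        - (1 / 2) * ∏ i, (if a i = 0 then (n i : ℂ) else gaussPeriod 2 F α (N i) (j i)) :=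
  stmt2_general u F α hα g n hord hcop N hN a j hj
end

section
/- Suppose a = 0 and b ∈ C_j^{(d_2, r)} for some 0 ≤ j ≤ d_2 − 1. Then the Hamming weight of c(a, b) equals (q−1)n_1 n_2/q − ((q−1) d_2 n_1/(q N_2)) · η_j^{(d_2, r)} (equality after casting the weight into ℂ). -/
/-!
With `a = 0` the word has period `n₂`, so its weight is `n₁` times the number of `t < n₂` with
`Tr_{r/q}(b g₂^t) ≠ 0`. Orthogonality of the additive characters of `F_q` turns `q` times this
count into `(q - 1) n₂ - S` with `S = Σ_t Σ_{u ∈ F_q^*} ψ(u b g₂^t)`. In the cyclic group `F_r^*`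
the subgroups `F_q^* = ⟨α^{N₀}⟩` and `⟨g₂⟩ = ⟨α^{N₂}⟩` generate `⟨α^{d₂}⟩`, and the product map
`F_q^* × ⟨g₂⟩ → ⟨α^{d₂}⟩` has fibres of constant size `(q - 1) d₂ / N₂`; since `b ⟨α^{d₂}⟩` is the
class `C_j^{(d₂,r)}`, this gives `S = (q - 1) d₂ / N₂ · η_j`.
-/

open Finset

section TraceCharacter

variable (p : ℕ) [Fact p.Prime] (E : Type*) [Field E] [Fintype E] [Algebra (ZMod p) E]

noncomputable def traceChar : AddChar E ℂ :=
  ZMod.stdAddChar.compAddMonoidHom (Algebra.trace (ZMod p) E).toAddMonoidHom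

lemma psi_eq_traceChar (x : E) : psi p E x = traceChar p E x := by
  simp [psi, traceChar, ZMod.stdAddChar_apply, ZMod.toCircle_apply]

lemma traceChar_isPrimitive : (traceChar p E).IsPrimitive := by
  refine AddChar.IsPrimitive.of_ne_one fun h => ?_
  obtain ⟨b, hb⟩ := Algebra.trace_surjective (ZMod p) E 1
  have := DFunLike.congr_fun h b
  rw [traceChar, AddChar.compAddMonoidHom_apply, AddChar.one_apply, LinearMap.toAddMonoidHom_coe,
    hb, ← (ZMod.stdAddChar (N := p)).map_zero_eq_one, ZMod.injective_stdAddChar.eq_iff] at this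
  exact one_ne_zero this

end TraceCharacter

lemma sum_units_eq_sum_sub_zero {K M : Type*} [Field K] [Fintype K] [DecidableEq K]
    [AddCommGroup M] (g : K → M) : ∑ u : Kˣ, g u = ∑ y, g y - g 0 := by
  rw [Fintype.sum_eq_add_sum_compl (0 : K) g, add_sub_cancel_left]
  exact Fintype.sum_equiv unitsEquivNeZero _ _ (fun _ => rfl) |>.trans
    (Finset.sum_subtype _ (by simp) _).symm

section SubfieldSum

variable (p : ℕ) [Fact p.Prime] {K F : Type*} [Field K] [Fintype K] [DecidableEq K] [Field F]
  [Fintype F] [Algebra (ZMod p) F] [Algebra K F]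

lemma sum_units_psi_algebraMap_mul (x : F) :
    ∑ u : Kˣ, psi p F (algebraMap K F u * x)
      = if Algebra.trace K F x = 0 then (Fintype.card K : ℂ) - 1 else -1 := by
  have : CharP F p := charP_of_injective_algebraMap (algebraMap (ZMod p) F).injective p
  have : CharP K p := (Algebra.charP_iff K F p).mpr ‹_›
  let : Algebra (ZMod p) K := ZMod.algebra K p
  have : IsScalarTower (ZMod p) K F := IsScalarTower.of_algebraMap_eq' (RingHom.ext_zmod _ _)
  have hsum : ∑ y : K, psi p F (algebraMap K F y * x)
      = if Algebra.trace K F x = 0 then (Fintype.card K : ℂ) else 0 := by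
    have h : ∀ y : K, psi p F (algebraMap K F y * x) = traceChar p K (y * Algebra.trace K F x) :=
      fun y => by
        rw [psi_eq_traceChar, traceChar, traceChar, AddChar.compAddMonoidHom_apply,
          AddChar.compAddMonoidHom_apply, LinearMap.toAddMonoidHom_coe,
          LinearMap.toAddMonoidHom_coe, ← Algebra.trace_trace (S := K), ← Algebra.smul_def,
          map_smul, smul_eq_mul]
    simp only [h, AddChar.sum_mulShift _ (traceChar_isPrimitive p K)]
    split_ifs <;> simp
  rw [sum_units_eq_sum_sub_zero (fun y => psi p F (algebraMap K F y * x)), hsum]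
  simp only [map_zero, zero_mul, psi_eq_traceChar, AddChar.map_zero_eq_one]
  split_ifs <;> ring

lemma card_mul_hammingNorm_trace {ι : Type*} [Fintype ι] (x : ι → F) :
    (Fintype.card K : ℂ) * hammingNorm (fun i => Algebra.trace K F (x i))
      = ((Fintype.card K : ℂ) - 1) * Fintype.card ι
        - ∑ i, ∑ u : Kˣ, psi p F (algebraMap K F u * x i) := by
  have hconst : ((Fintype.card K : ℂ) - 1) * Fintype.card ι
      = ∑ _i : ι, ((Fintype.card K : ℂ) - 1) := by
    rw [Finset.sum_const, Finset.card_univ, nsmul_eq_mul, mul_comm]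
  rw [hammingNorm, Finset.card_filter, Nat.cast_sum, Finset.mul_sum, hconst,
    ← Finset.sum_sub_distrib]
  refine Finset.sum_congr rfl fun i _ => ?_
  rw [sum_units_psi_algebraMap_mul]
  split_ifs <;> simp_all

end SubfieldSum

lemma hammingNorm_fin_mul_of_periodic {β : Type*} [Zero β] [DecidableEq β] {n : ℕ} (k : ℕ)
    (v : ℕ → β) (hv : Function.Periodic v n) :
    hammingNorm (fun t : Fin (k * n) => v t) = k * hammingNorm (fun t : Fin n => v t) := by
  simp only [hammingNorm, Finset.card_filter]
  rw [← Fintype.sum_equiv finProdFinEquiv (fun x => if v (x.2 + n * x.1 : ℕ) ≠ 0 then 1 else 0)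
    _ (fun _ => rfl), Fintype.sum_prod_type]
  have hper : ∀ (a : Fin k) (b : Fin n), v (b + n * a) = v b := fun a b => by
    rw [mul_comm]; exact hv.nat_mul a b
  simp only [hper, Finset.sum_const, Finset.card_univ, Fintype.card_fin, smul_eq_mul]

lemma Subgroup.zpowers_pow_sup_zpowers_pow {G : Type*} [Group G] (x : G) (a b : ℕ) :
    zpowers (x ^ a) ⊔ zpowers (x ^ b) = zpowers (x ^ a.gcd b) := by
  have hle : ∀ c, a.gcd b ∣ c → zpowers (x ^ c) ≤ zpowers (x ^ a.gcd b) := by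
    rintro c ⟨e, rfl⟩
    rw [zpowers_le, pow_mul]
    exact npow_mem_zpowers _ e
  refine le_antisymm (sup_le (hle a (Nat.gcd_dvd_left a b)) (hle b (Nat.gcd_dvd_right a b))) ?_
  rw [zpowers_le, ← zpow_natCast x (a.gcd b), Nat.gcd_eq_gcd_ab, zpow_add, zpow_mul, zpow_mul]
  exact mul_mem (mem_sup_left (zpow_mem (by simp) _)) (mem_sup_right (zpow_mem (by simp) _))

lemma IsCyclic.zpowers_pow_card_div_card {G : Type*} [Group G] [Finite G] {α : G}
    (hα : ∀ x, x ∈ Subgroup.zpowers α) (H : Subgroup G) :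
    Subgroup.zpowers (α ^ (Nat.card G / Nat.card H)) = H := by
  have hord : orderOf α = Nat.card G := orderOf_eq_card_of_forall_mem_zpowers hα
  have hdvd : Nat.card H ∣ Nat.card G := Subgroup.card_subgroup_dvd_card H
  have hcard : Nat.card (Subgroup.zpowers (α ^ (Nat.card G / Nat.card H))) = Nat.card H := by
    rw [Nat.card_zpowers, ← hord, orderOf_pow_orderOf_div (orderOf_pos α).ne' (hord ▸ hdvd)]
  refine (Subgroup.eq_of_le_of_card_ge ?_ hcard.le).symm
  intro x hx
  obtain ⟨n, rfl⟩ := (isOfFinOrder_of_finite α).mem_powers_iff_mem_zpowers.mpr (hα x)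
  have : orderOf α ∣ n * Nat.card H := by
    rw [orderOf_dvd_iff_pow_eq_one, pow_mul]
    exact congrArg Subtype.val (pow_card_eq_one' (G := H) (x := ⟨_, hx⟩))
  rw [hord, ← Nat.div_mul_cancel hdvd, Nat.mul_dvd_mul_iff_right Nat.card_pos] at this
  obtain ⟨e, rfl⟩ := this
  simpa only [pow_mul] using Subgroup.npow_mem_zpowers _ e

lemma IsCyclic.sup_eq_zpowers_pow_gcd {G : Type*} [Group G] [Finite G] {α : G}
    (hα : ∀ x, x ∈ Subgroup.zpowers α) (H₁ H₂ : Subgroup G) :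
    H₁ ⊔ H₂ = Subgroup.zpowers (α ^ (Nat.card G / Nat.card H₁).gcd (Nat.card G / Nat.card H₂)) := by
  rw [← Subgroup.zpowers_pow_sup_zpowers_pow, zpowers_pow_card_div_card hα,
    zpowers_pow_card_div_card hα]

lemma MonoidHom.range_coprod {M N P : Type*} [Group M] [Group N] [CommGroup P] (f : M →* P)
    (g : N →* P) : (f.coprod g).range = f.range ⊔ g.range := by
  ext x
  simp [Subgroup.mem_sup, eq_comm]

lemma MonoidHom.sum_comp_eq_card_ker_smul {G H M : Type*} [Group G] [Fintype G] [Group H]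
    [DecidableEq H] [AddCommMonoid M] (φ : G →* H) [Fintype φ.range] (f : H → M) :
    ∑ g, f (φ g) = Nat.card φ.ker • ∑ y : φ.range, f y := by
  have hfiber : ∀ y : φ.range, #{g | φ.rangeRestrict g = y} = Nat.card φ.ker := fun y => by
    rw [MonoidHom.card_fiber_eq_of_mem_range _ (φ.rangeRestrict_surjective y)
      (φ.rangeRestrict_surjective 1), Nat.card_eq_fintype_card, Fintype.card_subtype]
    simp [MonoidHom.mem_ker, Subtype.ext_iff]
  rw [Finset.smul_sum, ← Finset.sum_fiberwise Finset.univ φ.rangeRestrict]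
  refine Finset.sum_congr rfl fun y _ => ?_
  rw [← hfiber y, ← Finset.sum_const]
  exact Finset.sum_congr rfl fun g hg => by rw [← (Finset.mem_filter.mp hg).2]; rfl

lemma sum_zpowers_eq_sum_range {G M : Type*} [Group G] [Finite G] [AddCommMonoid M] (β : G)
    [Fintype (Subgroup.zpowers β)] (f : G → M) :
    ∑ y : Subgroup.zpowers β, f y = ∑ t ∈ range (orderOf β), f (β ^ t) := by
  rw [← Fin.sum_univ_eq_sum_range (fun t => f (β ^ t))]
  exact (Fintype.sum_equiv (finEquivZPowers (isOfFinOrder_of_finite β)) _ _ (fun _ => rfl)).symm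

lemma sum_zpowers_mul_pow_eq_sum_range {G M : Type*} [Group G] [Finite G] [AddCommMonoid M]
    (β γ : G) [Fintype (Subgroup.zpowers β)] (f : G → M) (k : ℕ) :
    ∑ y : Subgroup.zpowers β, f (γ * β ^ k * y) = ∑ t ∈ range (orderOf β), f (γ * β ^ t) := by
  rw [← sum_zpowers_eq_sum_range β (fun y => f (γ * y))]
  exact Fintype.sum_equiv (Equiv.mulLeft ⟨β ^ k, Subgroup.npow_mem_zpowers β k⟩) _ _
    (fun y => by simp [mul_assoc])

lemma card_smul_sum_sum_mul_pow {K' G M : Type*} [Group K'] [Fintype K'] [CommGroup G]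
    [Fintype G] [DecidableEq G] [AddCommMonoid M] (φ : K' →* G) (g : G) {S : Subgroup G}
    [Fintype S] (hS : φ.range ⊔ Subgroup.zpowers g = S) (f : G → M) :
    Nat.card S • ∑ t : Fin (orderOf g), ∑ u, f (φ u * g ^ (t : ℕ))
      = (Nat.card K' * orderOf g) • ∑ y : S, f y := by
  set ψ := φ.coprod (Subgroup.zpowers g).subtype
  have hψ : ψ.range = S := by
    rw [MonoidHom.range_coprod, Subgroup.range_subtype, hS]
  have hsum : ∑ t : Fin (orderOf g), ∑ u, f (φ u * g ^ (t : ℕ)) = ∑ x, f (ψ x) := by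
    rw [Finset.sum_comm, Fintype.sum_prod_type]
    exact Finset.sum_congr rfl fun u _ =>
      Fintype.sum_equiv (finEquivZPowers (isOfFinOrder_of_finite g)) _ _ fun _ => rfl
  have hcard : Nat.card ψ.ker * Nat.card S = Nat.card K' * orderOf g := by
    rw [← hψ, ← Subgroup.index_ker, Subgroup.card_mul_index, Nat.card_prod, Nat.card_zpowers]
  rw [hsum, ψ.sum_comp_eq_card_ker_smul, smul_smul, ← hcard, mul_comm]
  exact congrArg _ (Fintype.sum_equiv (MulEquiv.subgroupCongr hψ).toEquiv _ _ fun _ => rfl)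

section FiniteField

variable {K F : Type*} [Field K] [Fintype K] [Field F] [Fintype F] [Algebra K F]

lemma orderOf_units_dvd_card_sub_one (g : Fˣ) : orderOf g ∣ Fintype.card F - 1 := by
  simpa [Nat.card_units, Nat.card_eq_fintype_card] using orderOf_dvd_natCard g

lemma card_sub_one_div_orderOf_pos (g : Fˣ) : 0 < (Fintype.card F - 1) / orderOf g :=
  Nat.div_pos (Nat.le_of_dvd (Nat.sub_pos_of_lt Fintype.one_lt_card)
    (orderOf_units_dvd_card_sub_one g)) (orderOf_pos g)

lemma range_unitsMap_sup_zpowers {α : Fˣ} (hα : ∀ x, x ∈ Subgroup.zpowers α) (g : Fˣ) :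
    (Units.map (algebraMap K F : K →* F)).range ⊔ Subgroup.zpowers g
      = Subgroup.zpowers (α ^ ((Fintype.card F - 1) / (Fintype.card K - 1)).gcd
          ((Fintype.card F - 1) / orderOf g)) := by
  have hinj : Function.Injective (Units.map (algebraMap K F : K →* F)) := fun u v h =>
    Units.ext ((algebraMap K F).injective (congrArg Units.val h))
  have hrange : Nat.card (Units.map (algebraMap K F : K →* F)).range = Fintype.card K - 1 := by
    rw [← Nat.card_congr (MonoidHom.ofInjective hinj).toEquiv, Nat.card_units,
      Nat.card_eq_fintype_card]
  rw [IsCyclic.sup_eq_zpowers_pow_gcd hα, Nat.card_units, hrange, Nat.card_zpowers,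
    Nat.card_eq_fintype_card]

lemma sum_zpowers_psi_eq_gaussPeriod (p : ℕ) [Algebra (ZMod p) F] {α : Fˣ} {d : ℕ}
    (hord : orderOf (α ^ d) = (Fintype.card F - 1) / d) [Fintype (Subgroup.zpowers (α ^ d))]
    {j t₀ : ℕ} :
    ∑ y : Subgroup.zpowers (α ^ d), psi p F ((α ^ (j + d * t₀) * y : Fˣ) : F)
      = gaussPeriod p F α d j := by
  simp only [pow_add, pow_mul]
  rw [sum_zpowers_mul_pow_eq_sum_range (α ^ d) (α ^ j) (fun y : Fˣ => psi p F y), hord,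
    gaussPeriod]
  simp only [pow_add, pow_mul]

lemma natCast_mul_sum_sum_units_psi_eq_gaussPeriod [DecidableEq K] (p : ℕ) [Fact p.Prime]
    [Algebra (ZMod p) F] {α : Fˣ} (hα : ∀ x, x ∈ Subgroup.zpowers α) (g : Fˣ) {N₀ N₂ d₂ : ℕ}
    (hN₀ : N₀ = (Fintype.card F - 1) / (Fintype.card K - 1))
    (hN₂ : N₂ = (Fintype.card F - 1) / orderOf g) (hd₂ : d₂ = N₀.gcd N₂) {b : F} {j : ℕ}
    (hb : b ∈ cClass F α d₂ j) :
    (N₂ : ℂ) * ∑ t : Fin (orderOf g), ∑ u : Kˣ, psi p F (algebraMap K F u * (b * (g : F) ^ (t : ℕ)))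
      = ((Fintype.card K : ℂ) - 1) * d₂ * gaussPeriod p F α d₂ j := by
  classical
  obtain ⟨t₀, rfl⟩ := hb
  set L := Fintype.card F - 1
  have hL : Nat.card Fˣ = L := by rw [Nat.card_units, Nat.card_eq_fintype_card]
  have hordα : orderOf α = L := (orderOf_eq_card_of_forall_mem_zpowers hα).trans hL
  have hN₂g : N₂ * orderOf g = L := hN₂ ▸ Nat.div_mul_cancel (orderOf_units_dvd_card_sub_one g)
  have hN₂pos : 0 < N₂ := hN₂ ▸ card_sub_one_div_orderOf_pos g
  have hd₂N₂ : d₂ ∣ N₂ := hd₂ ▸ Nat.gcd_dvd_right _ _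
  have hd₂pos : 0 < d₂ := hd₂ ▸ Nat.gcd_pos_of_pos_right _ hN₂pos
  have hd₂L : d₂ * (L / d₂) = L := Nat.mul_div_cancel' (hd₂N₂.trans ⟨_, hN₂g.symm⟩)
  have hord : orderOf (α ^ d₂) = L / d₂ := by
    rw [orderOf_pow_of_dvd hd₂pos.ne' (hordα ▸ ⟨_, hd₂L.symm⟩), hordα]
  have hsup : (Units.map (algebraMap K F : K →* F)).range ⊔ Subgroup.zpowers g
      = Subgroup.zpowers (α ^ d₂) := by
    rw [range_unitsMap_sup_zpowers hα, ← hN₀, ← hN₂, ← hd₂]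
  have horbit := card_smul_sum_sum_mul_pow (Units.map (algebraMap K F : K →* F)) g hsup
    (fun y => psi p F ((α ^ (j + d₂ * t₀) * y : Fˣ) : F))
  have hterm : ∀ (u : Kˣ) (t : ℕ), ((α ^ (j + d₂ * t₀) * (Units.map (algebraMap K F : K →* F) u
      * g ^ t) : Fˣ) : F) = algebraMap K F u * (((α ^ (j + d₂ * t₀) : Fˣ) : F) * (g : F) ^ t) :=
    fun u t => by push_cast; exact mul_left_comm _ _ _
  rw [sum_zpowers_psi_eq_gaussPeriod p hord, Nat.card_zpowers, hord, nsmul_eq_mul,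
    nsmul_eq_mul] at horbit
  simp only [hterm, Nat.card_eq_fintype_card, Fintype.card_units] at horbit
  push_cast [Nat.cast_sub Fintype.card_pos] at horbit
  have hcast : (d₂ : ℂ) * (L / d₂ : ℕ) = N₂ * orderOf g := by exact_mod_cast hd₂L.trans hN₂g.symm
  refine mul_left_cancel₀ (Nat.cast_ne_zero.mpr (orderOf_pos g).ne' : (orderOf g : ℂ) ≠ 0) ?_
  linear_combination (d₂ : ℂ) * horbit - (∑ t : Fin (orderOf g), ∑ u : Kˣ,
    psi p F (algebraMap K F u * (((α ^ (j + d₂ * t₀) : Fˣ) : F) * (g : F) ^ (t : ℕ)))) * hcast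

end FiniteField

theorem stmt4_general (p : ℕ) [Fact p.Prime]
    (K F : Type*) [Field K] [Fintype K] [DecidableEq K] [Field F] [Fintype F]
    [Algebra (ZMod p) F] [Algebra K F]
    (α : Fˣ) (hα : ∀ x : Fˣ, x ∈ Subgroup.zpowers α)
    (g₁ g₂ : Fˣ) (n₁ n₂ : ℕ) (h₂ : orderOf g₂ = n₂)
    (N₀ N₂ d₂ : ℕ)
    (hN₀ : N₀ = (Fintype.card F - 1) / (Fintype.card K - 1))
    (hN₂ : N₂ = (Fintype.card F - 1) / n₂)
    (hd₂ : d₂ = Nat.gcd N₀ N₂)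
    (a b : F) (j : ℕ) (ha : a = 0) (hb : b ∈ cClass F α d₂ j) :
    (hammingNorm (fun t : Fin (n₁ * n₂) =>
        Algebra.trace K F (a * (g₁ : F) ^ (t : ℕ) + b * (g₂ : F) ^ (t : ℕ))) : ℂ)
      = ((Fintype.card K : ℂ) - 1) * (n₁ : ℂ) * (n₂ : ℂ) / (Fintype.card K : ℂ)
        - ((Fintype.card K : ℂ) - 1) * (d₂ : ℂ) * (n₁ : ℂ)
            / ((Fintype.card K : ℂ) * (N₂ : ℂ)) * gaussPeriod p F α d₂ j := by
  subst ha h₂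
  have hperiodic : Function.Periodic (fun t : ℕ => Algebra.trace K F (b * (g₂ : F) ^ t))
      (orderOf g₂) := fun t => by
    simp only [pow_add, ← Units.val_pow_eq_pow_val g₂ (orderOf g₂), pow_orderOf_eq_one,
      Units.val_one, mul_one]
  simp only [zero_mul, zero_add]
  rw [hammingNorm_fin_mul_of_periodic n₁ _ hperiodic]
  have hcount := card_mul_hammingNorm_trace p (K := K)
    (fun t : Fin (orderOf g₂) => b * (g₂ : F) ^ (t : ℕ))
  have horbit := natCast_mul_sum_sum_units_psi_eq_gaussPeriod p hα g₂ hN₀ hN₂ hd₂ hb (K := K)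
  have hN₂ne : (N₂ : ℂ) ≠ 0 := Nat.cast_ne_zero.mpr (hN₂ ▸ card_sub_one_div_orderOf_pos g₂).ne'
  have hq : (Fintype.card K : ℂ) ≠ 0 := Nat.cast_ne_zero.mpr Fintype.card_ne_zero
  rw [Fintype.card_fin] at hcount
  push_cast
  field_simp
  linear_combination (N₂ : ℂ) * n₁ * hcount - n₁ * horbit

/-- if `a = 0` and `b ∈ C_j^{(d₂,r)}`, the weight of `c(a,b)` is
`(q-1)n₁n₂/q - ((q-1)d₂n₁/(qN₂))·η_j^{(d₂,r)}`. -/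
theorem stmt4 (p s m : ℕ) [Fact p.Prime] (hs : 0 < s) (hm : 0 < m)
    (K F : Type*) [Field K] [Fintype K] [DecidableEq K] [Field F] [Fintype F]
    [Algebra (ZMod p) F] [Algebra K F]
    (hq : Fintype.card K = p ^ s) (hr : Fintype.card F = Fintype.card K ^ m)
    (α : Fˣ) (hα : ∀ x : Fˣ, x ∈ Subgroup.zpowers α)
    (g₁ g₂ : Fˣ) (n₁ n₂ : ℕ) (h₁ : orderOf g₁ = n₁) (h₂ : orderOf g₂ = n₂)
    (hcop : Nat.Coprime n₁ n₂)
    (N₀ N₁ N₂ d₁ d₂ d : ℕ)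
    (hN₀ : N₀ = (Fintype.card F - 1) / (Fintype.card K - 1))
    (hN₁ : N₁ = (Fintype.card F - 1) / n₁)
    (hN₂ : N₂ = (Fintype.card F - 1) / n₂)
    (hd₁ : d₁ = Nat.gcd N₀ N₁) (hd₂ : d₂ = Nat.gcd N₀ N₂)
    (hd : d = Nat.gcd (N₀ * N₂ / d₂) N₁)
    (a b : F) (j : ℕ) (hj : j < d₂) (ha : a = 0) (hb : b ∈ cClass F α d₂ j) :
    (hammingNorm (fun t : Fin (n₁ * n₂) =>
        Algebra.trace K F (a * (g₁ : F) ^ (t : ℕ) + b * (g₂ : F) ^ (t : ℕ))) : ℂ)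
      = ((Fintype.card K : ℂ) - 1) * (n₁ : ℂ) * (n₂ : ℂ) / (Fintype.card K : ℂ)
        - ((Fintype.card K : ℂ) - 1) * (d₂ : ℂ) * (n₁ : ℂ)
            / ((Fintype.card K : ℂ) * (N₂ : ℂ)) * gaussPeriod p F α d₂ j :=
  stmt4_general p K F α hα g₁ g₂ n₁ n₂ h₂ N₀ N₂ d₂ hN₀ hN₂ hd₂ a b j ha hb
end

section
/- Suppose a = 0, b ∈ C_j^{(N_2, r)} for some 0 ≤ j ≤ N_2 − 1, and Tr_{r/q}(c) ∈ C_k^{(N_2/d_2, q)} for some 0 ≤ k ≤ N_2/d_2 − 1. Then the Hamming weight of c(a, b, c) equals (q−1)n_1 n_2/q − (n_1/q) · Σ_{i=0}^{N_2/d_2 − 1} η_{N_0 i + j}^{(N_2, r)} η_{i + k}^{(N_2/d_2, q)} (equality after casting the weight into ℂ; indices read modulo N_2 and modulo N_2/d_2 respectively). -/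
/-
Expand the indicator of `Tr_{r/q}(b g₂ᵗ + c) ≠ 0` with the additive characters `y ↦ ψ_q(y ·)`
of `F_q`: the weight becomes `(q-1)n/q` minus a character sum over `y ∈ F_q^* = ⟨β⟩`. Since
`ψ_q ∘ Tr_{r/q} = ψ_r`, the term of `y = β^l` factors as `ψ_r(α^{N₀ l} b g₂ᵗ) · ψ_q(β^l Tr c)`.
As `⟨g₂⟩ = ⟨α^{N₂}⟩`, the sum over `t` is `n₁ η_{N₀ l + j}^{(N₂,r)}`, which only depends on
`l` modulo `N₂/d₂` because `N₀ N₂ / d₂ = lcm(N₀, N₂)` is a multiple of `N₂`. Grouping `l` by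
this residue, the remaining sums of `ψ_q(β^l Tr c)` are the Gauss periods
`η_{i+k}^{(N₂/d₂,q)}`.
-/

open Finset

section RangeSums

variable {M : Type*} [AddCommMonoid M]

theorem Finset.sum_range_mul_eq_sum_sum (f : ℕ → M) (k n : ℕ) :
    ∑ t ∈ range (k * n), f t = ∑ u ∈ range k, ∑ i ∈ range n, f (u * n + i) := by
  induction k with
  | zero => simp
  | succ k ih => rw [Nat.succ_mul, sum_range_add, ih, sum_range_succ]

theorem Function.Periodic.sum_range_add {M : Type*} [AddCancelCommMonoid M] {f : ℕ → M}
    {n : ℕ} (hf : Function.Periodic f n) (s : ℕ) :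
    ∑ t ∈ range n, f (s + t) = ∑ t ∈ range n, f t := by
  induction s with
  | zero => simp
  | succ s ih =>
    rw [← ih]
    have h := (sum_range_succ' (fun t => f (s + t)) n).symm.trans (sum_range_succ _ n)
    rw [hf s, add_zero] at h
    simpa only [add_assoc, add_comm 1, add_left_inj] using h

theorem Function.Periodic.sum_range_mul {f : ℕ → M} {n : ℕ} (hf : Function.Periodic f n)
    (k : ℕ) : ∑ t ∈ range (k * n), f t = k • ∑ t ∈ range n, f t := by
  rw [sum_range_mul_eq_sum_sum, ← card_range k, ← sum_const, card_range]
  refine sum_congr rfl fun u _ => sum_congr rfl fun i _ => ?_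
  simpa [add_comm] using hf.nat_mul u i

theorem Function.Periodic.sum_range_mul_mul {R : Type*} [CommSemiring R] {A : ℕ → R} {n : ℕ}
    (hA : Function.Periodic A n) (B : ℕ → R) (k : ℕ) :
    ∑ l ∈ range (k * n), A l * B l
      = ∑ i ∈ range n, A i * ∑ u ∈ range k, B (u * n + i) := by
  rw [sum_range_mul_eq_sum_sum, sum_comm]
  refine sum_congr rfl fun i _ => ?_
  rw [mul_sum]
  refine sum_congr rfl fun u _ => ?_
  rw [show A (u * n + i) = A i by simpa [add_comm] using hA.nat_mul u i]

end RangeSums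

section PowerSums

variable {M : Type*} [AddCommMonoid M]

theorem pow_injOn_range_orderOf {G : Type*} [Monoid G] (g : G) :
    Set.InjOn (g ^ ·) (range (orderOf g)) :=
  fun _ ha _ hb => pow_injOn_Iio_orderOf (by simpa using ha) (by simpa using hb)

theorem sum_range_orderOf_pow_eq_sum_univ {G : Type*} [Monoid G] [Fintype G] {g : G}
    (hg : orderOf g = Fintype.card G) (f : G → M) :
    ∑ t ∈ range (orderOf g), f (g ^ t) = ∑ x, f x := by
  classical
  rw [← sum_image (pow_injOn_range_orderOf g),
    eq_univ_of_card ((range (orderOf g)).image (g ^ ·))]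
  rw [card_image_of_injOn (pow_injOn_range_orderOf g), card_range, hg]

theorem sum_range_orderOf_pow_eq_of_zpowers_eq {G : Type*} [Group G] [Finite G] {g h : G}
    (hgh : Subgroup.zpowers g = Subgroup.zpowers h) (f : G → M) :
    ∑ t ∈ range (orderOf g), f (g ^ t) = ∑ t ∈ range (orderOf h), f (h ^ t) := by
  classical
  rw [← sum_image (pow_injOn_range_orderOf g), ← sum_image (pow_injOn_range_orderOf h)]
  congr 1
  ext x
  rw [← mem_zpowers_iff_mem_range_orderOf, ← mem_zpowers_iff_mem_range_orderOf, hgh]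

/-- In a domain there is only one cyclic subgroup of units of each finite order. -/
theorem sum_range_orderOf_pow_eq_of_orderOf_eq {R : Type*} [CommRing R] [IsDomain R]
    [Finite Rˣ] {g h : Rˣ} (hgh : orderOf g = orderOf h) (f : Rˣ → M) :
    ∑ t ∈ range (orderOf g), f (g ^ t) = ∑ t ∈ range (orderOf h), f (h ^ t) := by
  refine sum_range_orderOf_pow_eq_of_zpowers_eq ?_ f
  have : NeZero (orderOf g) := ⟨(orderOf_pos g).ne'⟩
  rw [(IsPrimitiveRoot.orderOf g).zpowers_eq, hgh]
  have : NeZero (orderOf h) := ⟨(orderOf_pos h).ne'⟩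
  rw [(IsPrimitiveRoot.orderOf h).zpowers_eq]

end PowerSums

theorem Fintype.sum_eq_add_sum_units {G₀ M : Type*} [GroupWithZero G₀] [Fintype G₀]
    [DecidableEq G₀] [AddCommMonoid M] (f : G₀ → M) :
    ∑ x, f x = f 0 + ∑ u : G₀ˣ, f u := by
  rw [Fintype.sum_eq_add_sum_compl 0, sum_subtype {0}ᶜ (p := (· ≠ 0)) (by simp)]
  exact congrArg _ (Equiv.sum_comp unitsEquivNeZero (fun a : {a : G₀ // a ≠ 0} => f a)).symm

theorem ne_zero_of_dvd_card_sub_one {L : Type*} [Fintype L] [Nontrivial L] {N : ℕ}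
    (hN : N ∣ Fintype.card L - 1) : N ≠ 0 := by
  rintro rfl
  have : 1 < Fintype.card L := Fintype.one_lt_card
  rw [zero_dvd_iff] at hN
  omega

theorem Nat.dvd_mul_div_gcd (a b : ℕ) : b ∣ a * (b / Nat.gcd a b) := by
  rw [← Nat.mul_div_assoc _ (Nat.gcd_dvd_right a b)]
  exact Nat.dvd_lcm_right a b

theorem Nat.div_gcd_dvd_of_dvd_mul {a b c : ℕ} (ha : a ≠ 0) (h : b ∣ a * c) :
    b / Nat.gcd a b ∣ c := by
  refine Nat.dvd_of_mul_dvd_mul_left (Nat.pos_of_ne_zero ha) ?_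
  rw [← Nat.mul_div_assoc _ (Nat.gcd_dvd_right a b)]
  exact Nat.lcm_dvd (Nat.dvd_mul_right a c) h

section GaussPeriods

variable {p : ℕ} {L : Type*} [Field L] [Fintype L] [Algebra (ZMod p) L] {γ : Lˣ} {N : ℕ}

theorem gaussPeriod_add_mul (hN : N ∣ Fintype.card L - 1) (i s : ℕ) :
    gaussPeriod p L γ N (i + N * s) = gaussPeriod p L γ N i := by
  have hγ : γ ^ (Fintype.card L - 1) = 1 := by
    classical
    rw [← Fintype.card_units]
    exact pow_card_eq_one
  have hper : Function.Periodic (fun t => psi p L ((γ ^ (i + N * t) : Lˣ) : L))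
      ((Fintype.card L - 1) / N) := by
    intro t
    simp only [mul_add, ← add_assoc, Nat.mul_div_cancel' hN, pow_add _ _ (Fintype.card L - 1),
      hγ, mul_one]
  rw [gaussPeriod, gaussPeriod, ← hper.sum_range_add s]
  simp only [mul_add, add_assoc]

theorem gaussPeriod_eq_sum_range_orderOf (hγ : orderOf γ = Fintype.card L - 1) {g : Lˣ}
    (hN : N * orderOf g = Fintype.card L - 1) {x : L} {i : ℕ} (hx : x ∈ cClass L γ N i) :
    gaussPeriod p L γ N i = ∑ t ∈ range (orderOf g), psi p L (x * (g ^ t : Lˣ)) := by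
  obtain ⟨s, rfl⟩ := hx
  have hdvd : N ∣ Fintype.card L - 1 := ⟨_, hN.symm⟩
  have hN0 := ne_zero_of_dvd_card_sub_one hdvd
  have hord : orderOf (γ ^ N) = orderOf g := by
    rw [orderOf_pow_of_dvd hN0 (hγ ▸ hdvd), hγ, ← hN, Nat.mul_div_cancel_left _ hN0.bot_lt]
  rw [← gaussPeriod_add_mul hdvd i s, gaussPeriod, ← hN, Nat.mul_div_cancel_left _ hN0.bot_lt,
    ← sum_range_orderOf_pow_eq_of_orderOf_eq hord (fun u => psi p L (_ * (u : L))), hord]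
  refine sum_congr rfl fun t _ => ?_
  rw [← Units.val_mul, ← pow_mul, ← pow_add, add_assoc, ← mul_add]

end GaussPeriods

noncomputable def psiChar (p : ℕ) [NeZero p] (F : Type*) [CommRing F] [Algebra (ZMod p) F] :
    AddChar F ℂ :=
  (ZMod.stdAddChar (N := p)).compAddMonoidHom (Algebra.trace (ZMod p) F).toAddMonoidHom

section Characters

variable (p : ℕ) [Fact p.Prime]

theorem psiChar_apply (F : Type*) [Field F] [Fintype F] [Algebra (ZMod p) F] (x : F) :
    psiChar p F x = psi p F x := by
  simp [psiChar, psi, ZMod.stdAddChar_apply, ZMod.toCircle_apply]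

theorem psiChar_ne_one (F : Type*) [Field F] [Finite F] [Algebra (ZMod p) F] :
    psiChar p F ≠ 1 := by
  have : Module.Finite (ZMod p) F := Module.Finite.of_finite
  obtain ⟨x, hx⟩ := Algebra.trace_surjective (ZMod p) F 1
  rw [AddChar.ne_one_iff]
  refine ⟨x, ?_⟩
  rw [psiChar, AddChar.compAddMonoidHom_apply, LinearMap.toAddMonoidHom_coe, hx,
    ← (ZMod.stdAddChar (N := p)).map_zero_eq_one, Ne, ZMod.injective_stdAddChar.eq_iff]
  exact one_ne_zero

theorem psiChar_trace (K F : Type*) [Field K] [Finite K] [Field F] [Finite F]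
    [Algebra (ZMod p) K] [Algebra (ZMod p) F] [Algebra K F] (x : F) :
    psiChar p K (Algebra.trace K F x) = psiChar p F x := by
  have : IsScalarTower (ZMod p) K F := IsScalarTower.of_algebraMap_eq' (RingHom.ext_zmod _ _)
  have : Module.Finite (ZMod p) K := Module.Finite.of_finite
  have : Module.Finite K F := Module.Finite.of_finite
  simp only [psiChar, AddChar.compAddMonoidHom_apply, LinearMap.toAddMonoidHom_coe,
    Algebra.trace_trace]

theorem psiChar_mul_trace (K F : Type*) [Field K] [Finite K] [Field F] [Finite F]
    [Algebra (ZMod p) K] [Algebra (ZMod p) F] [Algebra K F] (y : K) (x : F) :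
    psiChar p K (y * Algebra.trace K F x) = psiChar p F (algebraMap K F y * x) := by
  rw [← smul_eq_mul, ← map_smul, Algebra.smul_def, psiChar_trace]

end Characters

theorem card_mul_hammingNorm_eq {K ι : Type*} [Field K] [Fintype K] [DecidableEq K] [Fintype ι]
    {ψ : AddChar K ℂ} (hψ : ψ.IsPrimitive) (w : ι → K) :
    (Fintype.card K : ℂ) * hammingNorm w
      = ((Fintype.card K : ℂ) - 1) * Fintype.card ι - ∑ y : Kˣ, ∑ i, ψ (y * w i) := by
  have hcoord : ∀ x : K, (Fintype.card K : ℂ) * (if x = 0 then 0 else 1)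
      = (Fintype.card K - 1) - ∑ y : Kˣ, ψ (y * x) := by
    intro x
    have h := AddChar.sum_mulShift x hψ
    rw [Fintype.sum_eq_add_sum_units, zero_mul, AddChar.map_zero_eq_one] at h
    split_ifs at h ⊢ <;> push_cast at h <;> linear_combination h
  rw [hammingNorm, card_filter, Nat.cast_sum, mul_sum, sum_comm]
  simp only [Nat.cast_ite, Nat.cast_zero, Nat.cast_one, ite_not, hcoord, sum_sub_distrib,
    sum_const, card_univ, nsmul_eq_mul]
  ring

section CharacterSum

variable {p : ℕ} [Fact p.Prime] {K F : Type*} [Field K] [Fintype K] [Field F] [Fintype F]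
  [Algebra (ZMod p) K] [Algebra (ZMod p) F] [Algebra K F] {α : Fˣ} {β : Kˣ} {N₀ : ℕ}

theorem orderOf_eq_of_algebraMap_eq_pow (hα : orderOf α = Fintype.card F - 1)
    (hN₀ : N₀ * (Fintype.card K - 1) = Fintype.card F - 1)
    (hβ : algebraMap K F β = (α ^ N₀ : Fˣ)) : orderOf β = Fintype.card K - 1 := by
  have hN₀0 := ne_zero_of_dvd_card_sub_one (L := F) ⟨_, hN₀.symm⟩
  rw [← orderOf_units,
    ← orderOf_injective (algebraMap K F : K →* F) (algebraMap K F).injective, MonoidHom.coe_coe,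
    hβ, orderOf_units, orderOf_pow_of_dvd hN₀0 ⟨_, hα.trans hN₀.symm⟩, hα, ← hN₀,
    Nat.mul_div_cancel_left _ hN₀0.bot_lt]

theorem sum_range_psiChar_trace_mul (hα : orderOf α = Fintype.card F - 1)
    (hβ : algebraMap K F β = (α ^ N₀ : Fˣ)) {g : Fˣ} {N : ℕ}
    (hN : N * orderOf g = Fintype.card F - 1) {b : F} {j : ℕ} (hb : b ∈ cClass F α N j) (c : F)
    (n₁ l : ℕ) :
    ∑ t ∈ range (n₁ * orderOf g),
        psiChar p K ((β ^ l : Kˣ) * Algebra.trace K F (b * (g : F) ^ t + c))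
      = n₁ * gaussPeriod p F α N (N₀ * l + j)
          * psiChar p K ((β ^ l : Kˣ) * Algebra.trace K F c) := by
  set x : F := (α ^ (N₀ * l) : Fˣ) * b
  have hx : x ∈ cClass F α N (N₀ * l + j) := by
    obtain ⟨s, rfl⟩ := hb
    exact ⟨s, by simp only [x, ← Units.val_mul, ← pow_add, add_assoc]⟩
  have hy : algebraMap K F (β ^ l : Kˣ) = (α ^ (N₀ * l) : Fˣ) := by
    rw [Units.val_pow_eq_pow_val, map_pow, hβ, ← Units.val_pow_eq_pow_val, ← pow_mul]
  have hsplit : ∀ t : ℕ, psiChar p K ((β ^ l : Kˣ) * Algebra.trace K F (b * (g : F) ^ t + c))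
      = psiChar p F (x * (g : F) ^ t) * psiChar p K ((β ^ l : Kˣ) * Algebra.trace K F c) := by
    intro t
    rw [map_add, mul_add, AddChar.map_add_eq_mul, psiChar_mul_trace, hy, mul_assoc]
  have hper : Function.Periodic (fun t => psiChar p F (x * (g : F) ^ t)) (orderOf g) := by
    intro t
    simp only [pow_add, ← Units.val_pow_eq_pow_val, pow_orderOf_eq_one, Units.val_one, mul_one]
  rw [sum_congr rfl fun t _ => hsplit t, ← sum_mul, hper.sum_range_mul, nsmul_eq_mul,
    gaussPeriod_eq_sum_range_orderOf hα hN hx]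
  simp only [psiChar_apply, Units.val_pow_eq_pow_val]

theorem sum_range_psiChar_pow_mul (hβ : orderOf β = Fintype.card K - 1) {e m : ℕ}
    (hm : Fintype.card K - 1 = e * m) {z : K} {k : ℕ} (hz : z ∈ cClass K β e k) (i : ℕ) :
    ∑ u ∈ range m, psiChar p K ((β ^ (u * e + i) : Kˣ) * z)
      = gaussPeriod p K β e (i + k) := by
  have he0 := ne_zero_of_dvd_card_sub_one ⟨m, hm⟩
  have hβe : orderOf (β ^ e) = m := by
    rw [orderOf_pow_of_dvd he0 ⟨m, hβ.trans hm⟩, hβ, hm, Nat.mul_div_cancel_left _ he0.bot_lt]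
  have hz' : ((β ^ i : Kˣ) : K) * z ∈ cClass K β e (i + k) := by
    obtain ⟨s, rfl⟩ := hz
    exact ⟨s, by rw [← Units.val_mul, ← pow_add, add_assoc]⟩
  rw [gaussPeriod_eq_sum_range_orderOf hβ (by rw [hβe, hm]) hz', hβe]
  refine sum_congr rfl fun u _ => ?_
  rw [psiChar_apply, mul_right_comm, ← Units.val_mul, ← pow_mul, ← pow_add, mul_comm e u,
    add_comm]

theorem sum_units_sum_range_psiChar_trace [DecidableEq K] (hα : orderOf α = Fintype.card F - 1)
    (hN₀ : N₀ * (Fintype.card K - 1) = Fintype.card F - 1)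
    (hβ : algebraMap K F β = (α ^ N₀ : Fˣ)) {g : Fˣ} {N : ℕ}
    (hN : N * orderOf g = Fintype.card F - 1) {e : ℕ} (he : e ∣ Fintype.card K - 1)
    (hNe : N ∣ N₀ * e) {b : F} {j : ℕ} (hb : b ∈ cClass F α N j) {c : F} {k : ℕ}
    (hc : Algebra.trace K F c ∈ cClass K β e k) (n₁ : ℕ) :
    ∑ y : Kˣ, ∑ t ∈ range (n₁ * orderOf g),
        psiChar p K (y * Algebra.trace K F (b * (g : F) ^ t + c))
      = n₁ * ∑ i ∈ range e,
          gaussPeriod p F α N (N₀ * i + j) * gaussPeriod p K β e (i + k) := by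
  have hβord := orderOf_eq_of_algebraMap_eq_pow hα hN₀ hβ
  obtain ⟨m, hm⟩ := he
  have hA : Function.Periodic (fun l => n₁ * gaussPeriod p F α N (N₀ * l + j)) e := by
    obtain ⟨d, hd⟩ := hNe
    intro l
    simp only [mul_add, hd, add_right_comm _ (N * d),
      gaussPeriod_add_mul (p := p) (γ := α) ⟨_, hN.symm⟩]
  calc ∑ y : Kˣ, ∑ t ∈ range (n₁ * orderOf g),
        psiChar p K (y * Algebra.trace K F (b * (g : F) ^ t + c))
      = ∑ l ∈ range (m * e), n₁ * gaussPeriod p F α N (N₀ * l + j)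
          * psiChar p K ((β ^ l : Kˣ) * Algebra.trace K F c) := by
        rw [← sum_range_orderOf_pow_eq_sum_univ (hβord.trans (Fintype.card_units K).symm),
          hβord, hm, mul_comm]
        simp only [sum_range_psiChar_trace_mul hα hβ hN hb]
    _ = ∑ i ∈ range e, n₁ * gaussPeriod p F α N (N₀ * i + j)
          * ∑ u ∈ range m, psiChar p K ((β ^ (u * e + i) : Kˣ) * Algebra.trace K F c) :=
        hA.sum_range_mul_mul _ m
    _ = n₁ * ∑ i ∈ range e,
          gaussPeriod p F α N (N₀ * i + j) * gaussPeriod p K β e (i + k) := by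
        rw [mul_sum]
        refine sum_congr rfl fun i _ => ?_
        rw [sum_range_psiChar_pow_mul hβord hm hc, mul_assoc]

end CharacterSum

theorem stmt14_general (p m : ℕ) [Fact p.Prime]
    (K F : Type*) [Field K] [Fintype K] [DecidableEq K] [Field F] [Fintype F]
    [Algebra (ZMod p) K] [Algebra (ZMod p) F] [Algebra K F]
    (hr : Fintype.card F = Fintype.card K ^ m)
    (α : Fˣ) (hα : ∀ x : Fˣ, x ∈ Subgroup.zpowers α)
    (β : Kˣ)
    (hβ : algebraMap K F (β : K)
        = ((α ^ ((Fintype.card F - 1) / (Fintype.card K - 1)) : Fˣ) : F))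
    (g₁ g₂ : Fˣ) (n₁ n₂ : ℕ) (h₂ : orderOf g₂ = n₂)
    (N₀ N₂ d₂ : ℕ)
    (hN₀ : N₀ = (Fintype.card F - 1) / (Fintype.card K - 1))
    (hN₂ : N₂ = (Fintype.card F - 1) / n₂)
    (hd₂ : d₂ = Nat.gcd N₀ N₂)
    (a b c : F) (j k : ℕ)
    (ha : a = 0) (hb : b ∈ cClass F α N₂ j)
    (hc : Algebra.trace K F c ∈ cClass K β (N₂ / d₂) k) :
    (hammingNorm (fun t : Fin (n₁ * n₂) =>
        Algebra.trace K F (a * (g₁ : F) ^ (t : ℕ) + b * (g₂ : F) ^ (t : ℕ) + c)) : ℂ)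
      = ((Fintype.card K : ℂ) - 1) * (n₁ : ℂ) * (n₂ : ℂ) / (Fintype.card K : ℂ)
        - ((n₁ : ℂ) / (Fintype.card K : ℂ))
          * ∑ i ∈ Finset.range (N₂ / d₂),
              gaussPeriod p F α N₂ (N₀ * i + j) * gaussPeriod p K β (N₂ / d₂) (i + k) := by
  subst ha h₂ hd₂
  have hα' : orderOf α = Fintype.card F - 1 := by
    rw [orderOf_eq_card_of_forall_mem_zpowers hα, Nat.card_units, Nat.card_eq_fintype_card]
  have hN₀' : N₀ * (Fintype.card K - 1) = Fintype.card F - 1 := by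
    rw [hN₀, hr]
    exact Nat.div_mul_cancel (Nat.sub_one_dvd_pow_sub_one _ _)
  have hN₂' : N₂ * orderOf g₂ = Fintype.card F - 1 := by
    rw [hN₂, ← Nat.card_eq_fintype_card, ← Nat.card_units]
    exact Nat.div_mul_cancel (orderOf_dvd_natCard g₂)
  have he : N₂ / N₀.gcd N₂ ∣ Fintype.card K - 1 :=
    Nat.div_gcd_dvd_of_dvd_mul (ne_zero_of_dvd_card_sub_one (L := F) ⟨_, hN₀'.symm⟩)
      (hN₀' ▸ ⟨_, hN₂'.symm⟩)
  have hsum := sum_units_sum_range_psiChar_trace (p := p) hα' hN₀' (hN₀ ▸ hβ) hN₂' he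
    (Nat.dvd_mul_div_gcd N₀ N₂) hb hc n₁
  have hw := card_mul_hammingNorm_eq (AddChar.IsPrimitive.of_ne_one (psiChar_ne_one p K))
    (fun t : Fin (n₁ * orderOf g₂) => Algebra.trace K F (b * (g₂ : F) ^ (t : ℕ) + c))
  rw [sum_congr rfl fun (y : Kˣ) _ => Fin.sum_univ_eq_sum_range
    (fun t => psiChar p K ((y : K) * Algebra.trace K F (b * (g₂ : F) ^ t + c))) _, hsum,
    Fintype.card_fin, Nat.cast_mul] at hw
  have hq0 : (Fintype.card K : ℂ) ≠ 0 := Nat.cast_ne_zero.mpr Fintype.card_ne_zero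
  simp only [zero_mul, zero_add]
  field_simp
  linear_combination hw

/-- if `a = 0`, `b ∈ C_j^{(N₂,r)}` and `Tr_{r/q}(c) ∈ C_k^{(N₂/d₂,q)}`, the weight
of `c(a,b,c)` is
`(q-1)n₁n₂/q - (n₁/q) Σ_{i=0}^{N₂/d₂-1} η_{N₀i+j}^{(N₂,r)} η_{i+k}^{(N₂/d₂,q)}`. -/
theorem stmt14 (p s m : ℕ) [Fact p.Prime] (hs : 0 < s) (hm : 0 < m)
    (K F : Type*) [Field K] [Fintype K] [DecidableEq K] [Field F] [Fintype F]
    [Algebra (ZMod p) K] [Algebra (ZMod p) F] [Algebra K F]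
    (hq : Fintype.card K = p ^ s) (hr : Fintype.card F = Fintype.card K ^ m)
    (α : Fˣ) (hα : ∀ x : Fˣ, x ∈ Subgroup.zpowers α)
    (β : Kˣ)
    (hβ : algebraMap K F (β : K)
        = ((α ^ ((Fintype.card F - 1) / (Fintype.card K - 1)) : Fˣ) : F))
    (g₁ g₂ : Fˣ) (n₁ n₂ : ℕ) (h₁ : orderOf g₁ = n₁) (h₂ : orderOf g₂ = n₂)
    (hcop : Nat.Coprime n₁ n₂)
    (N₀ N₁ N₂ d₂ : ℕ)
    (hN₀ : N₀ = (Fintype.card F - 1) / (Fintype.card K - 1))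
    (hN₁ : N₁ = (Fintype.card F - 1) / n₁)
    (hN₂ : N₂ = (Fintype.card F - 1) / n₂)
    (hd₂ : d₂ = Nat.gcd N₀ N₂)
    (a b c : F) (j k : ℕ) (hj : j < N₂) (hk : k < N₂ / d₂)
    (ha : a = 0) (hb : b ∈ cClass F α N₂ j)
    (hc : Algebra.trace K F c ∈ cClass K β (N₂ / d₂) k) :
    (hammingNorm (fun t : Fin (n₁ * n₂) =>
        Algebra.trace K F (a * (g₁ : F) ^ (t : ℕ) + b * (g₂ : F) ^ (t : ℕ) + c)) : ℂ)
      = ((Fintype.card K : ℂ) - 1) * (n₁ : ℂ) * (n₂ : ℂ) / (Fintype.card K : ℂ)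
        - ((n₁ : ℂ) / (Fintype.card K : ℂ))
          * ∑ i ∈ Finset.range (N₂ / d₂),
              gaussPeriod p F α N₂ (N₀ * i + j) * gaussPeriod p K β (N₂ / d₂) (i + k) :=
  stmt14_general p m K F hr α hα β hβ g₁ g₂ n₁ n₂ h₂ N₀ N₂ d₂ hN₀ hN₂ hd₂ a b c j k ha hb hc
end
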